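/- arXiv:2510.17177 — 2 statements merged into one kernel-verified Lean document; each statement's English description precedes it below -/
import Mathlib

section
/- If an infinite word x over a finite alphabet is not ultimately periodic, then there exists a left-special factor w of x and two distinct letters a, b such that both aw and bw occur infinitely many times in x. -/
open Filter

variable {A : Type*}

/-- The factor of the infinite word `x` of length `n` starting at position `j` (0-indexed). -/
def subwordAt (x : ℕ → A) (j n : ℕ) : List A := (List.range n).map fun i => x (j + i)

/-- `w` is a factor (subword) of the infinite word `x`. -/
def IsFactor (w : List A) (x : ℕ → A) : Prop := ∃ j, subwordAt x j w.length = w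

/-- The subword complexity `p(n, x)`: the number of distinct length-`n` factors of `x`. -/
noncomputable def complexity (x : ℕ → A) (n : ℕ) : ℕ :=
  Set.ncard {w : List A | w.length = n ∧ IsFactor w x}

/-- `x` is ultimately periodic. -/
def UltimatelyPeriodic (x : ℕ → A) : Prop := ∃ N T, 0 < T ∧ ∀ i ≥ N, x (i + T) = x i

/-- `w` is a left-special factor of `x`. -/
def LeftSpecial (w : List A) (x : ℕ → A) : Prop :=
  ∃ a b : A, a ≠ b ∧ IsFactor (a :: w) x ∧ IsFactor (b :: w) x

/-- `w` is a right-special factor of `x`. -/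
def RightSpecial (w : List A) (x : ℕ → A) : Prop :=
  ∃ a b : A, a ≠ b ∧ IsFactor (w ++ [a]) x ∧ IsFactor (w ++ [b]) x

/-- `w` occurs infinitely many times in `x`. -/
def OccursInfinitely (w : List A) (x : ℕ → A) : Prop :=
  {j : ℕ | subwordAt x j w.length = w}.Infinite

/-- `x` is `n`-recurrent: every length-`n` factor occurs infinitely often. -/
def NRecurrent (n : ℕ) (x : ℕ → A) : Prop :=
  ∀ j : ℕ, {i : ℕ | subwordAt x i n = subwordAt x j n}.Infinite

/-- The shift of `x` by `s` places. -/
def shiftWord (x : ℕ → A) (s : ℕ) : ℕ → A := fun i => x (s + i)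

/-- `s_m`: the length of the `m`-th non-recurrent prefix of `x`. -/
noncomputable def srec (x : ℕ → A) (m : ℕ) : ℕ := sInf {s : ℕ | NRecurrent m (shiftWord x s)}

/-- `z_m`: the maximal `m`-recurrent tail of `x`, so that `x = a_m z_m`. -/
noncomputable def ztail (x : ℕ → A) (m : ℕ) : ℕ → A := shiftWord x (srec x m)

/-- The repetition function `r(n, x)`: the least `m ≥ 1` such that
`x_{m+1} … x_{m+n} = x_{i+1} … x_{i+n}` for some `0 ≤ i < m`. -/
noncomputable def repFn (x : ℕ → A) (n : ℕ) : ℕ :=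
  sInf {m : ℕ | 0 < m ∧ ∃ i < m, subwordAt x m n = subwordAt x i n}

/-- A right-special factor `w` is essential if it is a suffix of right-special
factors of every length `m ≥ |w|`. -/
def EssentialRightSpecial (w : List A) (x : ℕ → A) : Prop :=
  RightSpecial w x ∧
    ∀ m, w.length ≤ m → ∃ W : List A, W.length = m ∧ RightSpecial W x ∧ W.drop (m - w.length) = w

/-- `C` is (the word read along) a cycle at `w` in the Rauzy graph `𝒢_n(y)`:
it has length `> n`, prefix `w`, suffix `w`, and is a factor of `y`. -/
def IsCycleAt (y : ℕ → A) (n : ℕ) (w C : List A) : Prop :=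
  n < C.length ∧ C.take n = w ∧ C.drop (C.length - n) = w ∧ IsFactor C y

/-- The Rauzy graph `𝒢_n(y)` is of `∞`-shape with bi-special vertex `w`
and the two (simple) cycles `U` and `V`. -/
def InftyShape (y : ℕ → A) (n : ℕ) (w U V : List A) : Prop :=
  w.length = n ∧ LeftSpecial w y ∧ RightSpecial w y ∧
  (∀ v : List A, v.length = n → IsFactor v y → (LeftSpecial v y ∨ RightSpecial v y) → v = w) ∧
  IsCycleAt y n w U ∧ IsCycleAt y n w V ∧ U ≠ V ∧
  (∀ j, 0 < j → j < U.length - n → (U.drop j).take n ≠ w) ∧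
  (∀ j, 0 < j → j < V.length - n → (V.drop j).take n ≠ w) ∧
  (∀ v : List A, v.length = n → IsFactor v y →
    (∃ j ≤ U.length - n, (U.drop j).take n = v) ∨ (∃ j ≤ V.length - n, (V.drop j).take n = v))

/-- The word read along the concatenated path `U V^b U`, where `U`, `V` are
cycles at a vertex of length `n` (gluing overlaps of length `n`). -/
def cyclePow (n : ℕ) (U V : List A) (b : ℕ) : List A :=
  U ++ (List.replicate b (V.drop n)).flatten ++ U.drop n

/-- The irrationality exponent of a real number, valued in `ℝ≥0∞`. -/
noncomputable def irrationalityExponent (ξ : ℝ) : ENNReal :=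
  ⨆ (μ : ℝ) (_ : {q : ℕ | 0 < q ∧ ∃ p : ℤ, |ξ - p / q| < 1 / (q : ℝ) ^ μ}.Infinite),
    ENNReal.ofReal μ
lemma subwordAt_succ (x : ℕ → A) (j n : ℕ) :
    subwordAt x j (n + 1) = x j :: subwordAt x (j + 1) n := by
  simp only [subwordAt, List.range_succ_eq_map, List.map_cons, List.map_map, add_zero]
  congr 1
  · ext i
    simp [Function.comp, Nat.add_comm, Nat.add_assoc, Nat.add_left_comm]

lemma pigeon [Fintype A] {S : Set ℕ} (hS : S.Infinite) (f : ℕ → A) :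
    ∃ a : A, {j | j ∈ S ∧ f j = a}.Infinite := by
  haveI : Infinite S := hS.to_subtype
  obtain ⟨a, ha⟩ := Finite.exists_infinite_fiber (fun j : S => f j)
  refine ⟨a, ?_⟩
  have h1 : ((fun j : S => f j) ⁻¹' {a} : Set S).Infinite := Set.infinite_coe_iff.mp ha
  have h2 := h1.image (Subtype.val_injective.injOn)
  refine h2.mono ?_
  rintro j ⟨⟨j', hj'⟩, hm, rfl⟩
  exact ⟨hj', hm⟩

lemma occ_ext [Fintype A] {x : ℕ → A} {w : List A} (hw : OccursInfinitely w x) :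
    ∃ a : A, OccursInfinitely (a :: w) x := by
  have hS : ({j | subwordAt x (j + 1) w.length = w}).Infinite := by
    have h0 : ({j | subwordAt x j w.length = w} \ {0}).Infinite :=
      hw.diff (Set.finite_singleton 0)
    have hsub : ({j | subwordAt x j w.length = w} \ {0}) ⊆
        Nat.succ '' {j | subwordAt x (j + 1) w.length = w} := by
      rintro j ⟨hj, hj0⟩
      obtain ⟨k, rfl⟩ := Nat.exists_eq_succ_of_ne_zero (by simpa using hj0)
      exact ⟨k, hj, rfl⟩
    exact Set.Infinite.of_image _ (h0.mono hsub)
  obtain ⟨a, ha⟩ := pigeon hS x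
  refine ⟨a, ?_⟩
  refine ha.mono ?_
  rintro j ⟨hj, hja⟩
  show subwordAt x j (a :: w).length = a :: w
  simp only [List.length_cons, subwordAt_succ, hja]
  rw [show subwordAt x (j + 1) w.length = w from hj]

lemma occ_tail {x : ℕ → A} {a : A} {w : List A} (h : OccursInfinitely (a :: w) x) :
    OccursInfinitely w x := by
  have := (h.image (Nat.succ_injective.injOn))
  refine this.mono ?_
  rintro j ⟨k, hk, rfl⟩
  have : subwordAt x k (w.length + 1) = a :: w := hk
  rw [subwordAt_succ] at this
  exact (List.cons.injEq _ _ _ _ ▸ this).2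

lemma occ_factor {x : ℕ → A} {w : List A} (h : OccursInfinitely w x) : IsFactor w x :=
  h.nonempty.imp fun _ hj => hj

lemma occ_nil (x : ℕ → A) : OccursInfinitely ([] : List A) x := by
  have : {j : ℕ | subwordAt x j 0 = []} = Set.univ := by
    ext j; simp [subwordAt]
  simpa [OccursInfinitely, this] using Set.infinite_univ

theorem exists_leftSpecial_with_infinite_extensions
    {A : Type*} [Fintype A] (x : ℕ → A) (hx : ¬ UltimatelyPeriodic x) :
    ∃ (w : List A) (a b : A), a ≠ b ∧ LeftSpecial w x ∧
      OccursInfinitely (a :: w) x ∧ OccursInfinitely (b :: w) x := by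
  by_contra h
  have key : ∀ (w : List A) (a b : A), OccursInfinitely (a :: w) x →
      OccursInfinitely (b :: w) x → a = b := by
    intro w a b ha hb
    by_contra hab
    exact h ⟨w, a, b, hab, ⟨a, b, hab, occ_factor ha, occ_factor hb⟩, ha, hb⟩
  have uniq : ∀ n : ℕ, ∃ w : List A, w.length = n ∧ OccursInfinitely w x ∧
      ∀ v : List A, v.length = n → OccursInfinitely v x → v = w := by
    intro n
    induction n with
    | zero => exact ⟨[], rfl, occ_nil x, fun v hv _ => List.eq_nil_of_length_eq_zero hv⟩
    | succ n ih =>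
      obtain ⟨w, hwl, hwo, hwu⟩ := ih
      obtain ⟨a, ha⟩ := occ_ext hwo
      refine ⟨a :: w, by simp [hwl], ha, ?_⟩
      intro v hv hvo
      match v, hv with
      | c :: u, hv =>
        have hu : u = w := hwu u (by simpa using hv) (occ_tail hvo)
        subst hu
        rw [key u c a hvo ha]
  obtain ⟨w, hwl, hwo, hwu⟩ := uniq 1
  match w, hwl with
  | [c], _ =>
    have hfin : {j : ℕ | x j ≠ c}.Finite := by
      by_contra hinf
      obtain ⟨a, ha⟩ := pigeon hinf x
      obtain ⟨j0, hj0, hj0a⟩ := ha.nonempty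
      have hac : a ≠ c := hj0a ▸ hj0
      have hocc : OccursInfinitely [a] x := by
        refine ha.mono ?_
        rintro j ⟨-, hja⟩
        show subwordAt x j 1 = [a]
        rw [show (1:ℕ) = 0 + 1 from rfl, subwordAt_succ, hja]
        simp [subwordAt]
      exact hac (by simpa using hwu [a] rfl hocc)
    obtain ⟨N, hN⟩ := hfin.bddAbove
    apply hx
    refine ⟨N + 1, 1, one_pos, fun i hi => ?_⟩
    have hxc : ∀ j, N + 1 ≤ j → x j = c := by
      intro j hj
      by_contra hjc
      exact absurd (hN hjc) (by omega)
    rw [hxc i hi, hxc (i + 1) (by omega)]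
end

section
/- Let x be an infinite word, let a_n be the n-th non-recurrent prefix of x and s_n = |a_n| its length. Then p(n + s_n − 1, x) = p(n + s_n − 1, z_n) + s_n, where x = a_n z_n. -/
open Filter

variable {A : Type*}

section Aux
variable {A : Type*}

lemma length_subwordAt (x : ℕ → A) (j n : ℕ) : (subwordAt x j n).length = n := by
  simp [subwordAt]

lemma subwordAt_shiftWord (x : ℕ → A) (s i m : ℕ) :
    subwordAt (shiftWord x s) i m = subwordAt x (s + i) m := by
  simp [subwordAt, shiftWord, Nat.add_assoc]

lemma subwordAt_eq_iff {x y : ℕ → A} {j k m : ℕ} :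
    subwordAt x j m = subwordAt y k m ↔ ∀ i < m, x (j + i) = y (k + i) := by
  simp [subwordAt, List.map_inj_left]

lemma subword_sub {x : ℕ → A} {j k N n t : ℕ} (h : subwordAt x j N = subwordAt x k N)
    (ht : t + n ≤ N) : subwordAt x (j + t) n = subwordAt x (k + t) n := by
  rw [subwordAt_eq_iff] at h ⊢
  intro i hi
  have := h (t + i) (by omega)
  simpa [Nat.add_assoc] using this

/-- occurrences in a shift give occurrences in the original word -/
lemma infinite_of_shift_infinite {x : ℕ → A} {s n : ℕ} {u : List A}
    (h : {k | subwordAt (shiftWord x s) k n = u}.Infinite) :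
    {k | subwordAt x k n = u}.Infinite := by
  have hsub : (fun k => s + k) '' {k | subwordAt (shiftWord x s) k n = u}
      ⊆ {k | subwordAt x k n = u} := by
    rintro _ ⟨k, hk, rfl⟩
    simpa [subwordAt_shiftWord] using hk
  exact Set.Infinite.mono hsub (h.image (fun a _ b _ hab => by omega))

/-- occurrences in the original word give occurrences in a shift -/
lemma shift_infinite_of_infinite {x : ℕ → A} {s n : ℕ} {u : List A}
    (h : {k | subwordAt x k n = u}.Infinite) :
    {k | subwordAt (shiftWord x s) k n = u}.Infinite := by
  by_contra hfin
  rw [Set.not_infinite] at hfin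
  apply h
  apply Set.Finite.subset ((hfin.image (fun k => s + k)).union (Set.finite_Iio s))
  intro k hk
  by_cases hks : s ≤ k
  · exact Or.inl ⟨k - s, by simpa [subwordAt_shiftWord, Nat.add_sub_cancel' hks] using hk,
      by show s + (k - s) = k; omega⟩
  · exact Or.inr (by simpa using by omega)

end Aux

theorem complexity_nonrecurrent_prefix {A : Type*} [Fintype A] (x : ℕ → A) (n : ℕ)
    (hn : 1 ≤ n) (hex : ∃ s : ℕ, NRecurrent n (shiftWord x s)) :
    complexity x (n + srec x n - 1) = complexity (ztail x n) (n + srec x n - 1) + srec x n := by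
  classical
  have hs_mem : NRecurrent n (shiftWord x (srec x n)) := Nat.sInf_mem hex
  set s := srec x n with hsdef
  rcases Nat.eq_zero_or_pos s with h0 | hpos
  · have hz : ztail x n = x := by
      funext i
      simp [ztail, shiftWord, ← hsdef, h0]
    rw [hz, h0]
    simp
  -- main case : s ≥ 1
  set N := n + s - 1 with hNdef
  -- every length-n factor occurring at a position ≥ s recurs infinitely often
  have hrec : ∀ i, s ≤ i → {k | subwordAt x k n = subwordAt x i n}.Infinite := by
    intro i hi
    have h1 : {k | subwordAt (shiftWord x s) k n = subwordAt (shiftWord x s) (i - s) n}.Infinite :=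
      hs_mem (i - s)
    have h2 : subwordAt (shiftWord x s) (i - s) n = subwordAt x i n := by
      rw [subwordAt_shiftWord, Nat.add_sub_cancel' hi]
    rw [h2] at h1
    exact infinite_of_shift_infinite h1
  -- the shift by s-1 is not n-recurrent
  have hnot : ¬ NRecurrent n (shiftWord x (s - 1)) := by
    have h1 : s - 1 < s := by omega
    have h2 : s = sInf {t : ℕ | NRecurrent n (shiftWord x t)} := hsdef.trans rfl
    exact Nat.notMem_of_lt_sInf (h2 ▸ h1)
  -- hence the word w at position s-1 occurs finitely often
  obtain ⟨i₀, hi₀⟩ : ∃ i₀, ¬ {k | subwordAt (shiftWord x (s-1)) k n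
      = subwordAt (shiftWord x (s-1)) i₀ n}.Infinite := by
    by_contra hcon
    push_neg at hcon
    exact hnot hcon
  have hi₀0 : i₀ = 0 := by
    by_contra hne
    apply hi₀
    have : s ≤ s - 1 + i₀ := by omega
    have h1 : {k | subwordAt x k n = subwordAt x (s - 1 + i₀) n}.Infinite := hrec _ this
    have h2 : subwordAt (shiftWord x (s-1)) i₀ n = subwordAt x (s - 1 + i₀) n :=
      subwordAt_shiftWord x (s-1) i₀ n
    rw [h2]
    exact shift_infinite_of_infinite h1
  set w : List A := subwordAt x (s - 1) n with hwdef
  have hw0 : subwordAt (shiftWord x (s-1)) 0 n = w := by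
    rw [subwordAt_shiftWord]; simp [hwdef]
  rw [hi₀0, hw0] at hi₀
  -- w occurs only at positions < s
  have hwfin : {k | subwordAt x k n = w}.Finite := by
    by_contra hcon
    exact hi₀ (shift_infinite_of_infinite hcon)
  have hwlt : ∀ k, subwordAt x k n = w → k < s := by
    intro k hk
    by_contra hge
    have := hrec k (by omega)
    rw [hk] at this
    exact hwfin.not_infinite this
  -- key uniqueness: an occurrence of the length-N factor at j < s is at position ≤ j
  have key : ∀ j, j < s → ∀ k, subwordAt x k N = subwordAt x j N → k ≤ j := by
    intro j hj k hk
    have ht : (s - 1 - j) + n ≤ N := by omega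
    have h1 : subwordAt x (k + (s - 1 - j)) n = subwordAt x (j + (s - 1 - j)) n :=
      subword_sub hk ht
    have h2 : j + (s - 1 - j) = s - 1 := by omega
    rw [h2, ← hwdef] at h1
    have := hwlt _ h1
    omega
  -- decompose the factor set
  have hunion : {W : List A | W.length = N ∧ IsFactor W x}
      = {W : List A | W.length = N ∧ IsFactor W (ztail x n)}
        ∪ (fun j => subwordAt x j N) '' Set.Iio s := by
    ext W
    constructor
    · rintro ⟨hlen, k, hk⟩
      rw [hlen] at hk
      by_cases hks : s ≤ k
      · refine Or.inl ⟨hlen, k - s, ?_⟩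
        rw [hlen]
        show subwordAt (shiftWord x s) (k - s) N = W
        rwa [subwordAt_shiftWord, Nat.add_sub_cancel' hks]
      · refine Or.inr ⟨k, ?_, hk⟩
        simp only [Set.mem_Iio]
        omega
    · rintro (⟨hlen, i, hi⟩ | ⟨j, hj, rfl⟩)
      · refine ⟨hlen, s + i, ?_⟩
        rw [hlen] at hi ⊢
        rw [← subwordAt_shiftWord]
        exact hi
      · exact ⟨length_subwordAt x j N, j, by rw [length_subwordAt]⟩
  have hdisj : Disjoint {W : List A | W.length = N ∧ IsFactor W (ztail x n)}
      ((fun j => subwordAt x j N) '' Set.Iio s) := by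
    rw [Set.disjoint_left]
    rintro W ⟨hlen, i, hi⟩ ⟨j, hj, rfl⟩
    rw [hlen] at hi
    have hi' : subwordAt x (s + i) N = subwordAt x j N := by
      rw [← subwordAt_shiftWord]; exact hi
    have h3 := key j hj (s + i) hi'
    have hj' : j < s := hj
    omega
  have hfinAll : {l : List A | l.length = N}.Finite := List.finite_length_eq A N
  have hfin1 : {W : List A | W.length = N ∧ IsFactor W (ztail x n)}.Finite :=
    hfinAll.subset (fun W hW => hW.1)
  have hfin2 : ((fun j => subwordAt x j N) '' Set.Iio s).Finite :=
    (Set.finite_Iio s).image _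
  have hinj : Set.InjOn (fun j => subwordAt x j N) (Set.Iio s) := by
    intro j hj k hk h
    have h1 := key k hk j h
    have h2 := key j hj k h.symm
    omega
  have himg : ((fun j => subwordAt x j N) '' Set.Iio s).ncard = s := by
    rw [Set.ncard_image_of_injOn hinj, ← Finset.coe_range, Set.ncard_coe_finset,
      Finset.card_range]
  show Set.ncard {W : List A | W.length = N ∧ IsFactor W x}
      = Set.ncard {W : List A | W.length = N ∧ IsFactor W (ztail x n)} + s
  rw [hunion, Set.ncard_union_eq hdisj hfin1 hfin2, himg]
end
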